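/- Hexagonal embedding independence: fix d = 3, p ∈ (0,1], λ ∈ [0,1] and k ∈ Z, and set V_1 = {(x,y,z) ∈ Z³ : x+y+z = k}, V_2 = {(x,y,z) ∈ Z³ : x+y+z = k+1}. Under ℙ_{p,λ,3}, the open/closed states of the nearest-neighbor edges of Z³ having one endpoint in V_1 and the other in V_2 form a family of independent Bernoulli random variables, each open with probability λ. -/

import Mathlib

open MeasureTheory ENNReal

namespace AlignmentPercolation

/-- Sites of the lattice `ℤ^d`. -/
abbrev Site (d : ℕ) := Fin d → ℤ

/-- A site configuration: `true` means occupied. -/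
abbrev SiteCfg (d : ℕ) := Site d → Bool

/-- Labels (open/closed) attached to (potential) segments, indexed by their ordered
pair of endpoints. -/
abbrev PairLabels (d : ℕ) := Site d × Site d → Bool

/-- A configuration of the independent alignment percolation model: a site
configuration together with independent labels for the segments. -/
abbrev Cfg (d : ℕ) := SiteCfg d × PairLabels d

/-- Nearest-neighbour edges of `ℤ^d`, indexed by their lower endpoint and direction:
`(u, i)` is the edge from `u` to `u + e_i`. -/
abbrev EdgeIdx (d : ℕ) := Site d × Fin d

/-- The point obtained from `u` by replacing its `i`-th coordinate with `a`. -/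
def seg {d : ℕ} (u : Site d) (i : Fin d) (a : ℤ) : Site d := Function.update u i a

/-- The point `u + e_i`. -/
def up {d : ℕ} (u : Site d) (i : Fin d) : Site d := seg u i (u i + 1)

/-- The skewed doubling map underlying the construction of an i.i.d.
Bernoulli(p) sequence from a single uniform random variable on `[0,1)`. -/
noncomputable def bernShift (p : ℝ) (x : ℝ) : ℝ :=
  if x < p then x / p else (x - p) / (1 - p)

open scoped Classical in
noncomputable def bernDigit (p : ℝ) (x : ℝ) : Bool := if x < p then true else false

/-- The sequence of skewed binary digits of `x`; under the uniform distribution on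
`[0,1)` this is an i.i.d. Bernoulli(p) sequence. -/
noncomputable def bernDigits (p : ℝ) (x : ℝ) : ℕ → Bool :=
  fun n => bernDigit p ((bernShift p)^[n] x)

/-- The i.i.d. Bernoulli(p) product probability measure on `ι → Bool`, for a countable
index type `ι`: the law of the family of skewed binary digits (indexed through an
injection `ι ↪ ℕ`) of a uniform random variable on `[0,1)`. Each coordinate is `true`
with probability `p` (with the convention that `p` is clamped to `[0,1]`). -/
noncomputable def iidBool (ι : Type*) [Countable ι] (p : ℝ) : Measure (ι → Bool) :=
  Measure.map (fun f (i : ι) => f ((Countable.exists_injective_nat ι).choose i))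
    (Measure.map (bernDigits p) (volume.restrict (Set.Ico (0 : ℝ) 1)))

/-- The law `ℙ_{p,λ,d}` of the independent alignment percolation model: sites are
occupied independently with probability `p`, and independently every potential
segment carries an independent Bernoulli(λ) label. -/
noncomputable def alignMeasure (d : ℕ) (p lam : ℝ) : Measure (Cfg d) :=
  (iidBool (Site d) p).prod (iidBool (Site d × Site d) lam)

/-- `(v, w)` is a feasible pair of the site configuration `ω` (ordered so that the
coordinate where they differ increases): `v` and `w` differ in exactly one
coordinate, are both occupied, and no site strictly between them is occupied. -/
def FeasiblePair {d : ℕ} (ω : SiteCfg d) (v w : Site d) : Prop :=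
  ∃ i : Fin d, (∀ j, j ≠ i → v j = w j) ∧ v i < w i ∧
    ω v = true ∧ ω w = true ∧ ∀ c : ℤ, v i < c → c < w i → ω (seg v i c) = false

/-- The edge `e` lies on the axis-parallel segment with endpoints `v` and `w`. -/
def EdgeOnSeg {d : ℕ} (e : EdgeIdx d) (v w : Site d) : Prop :=
  ∃ a b : ℤ, a ≤ e.1 e.2 ∧ e.1 e.2 < b ∧ v = seg e.1 e.2 a ∧ w = seg e.1 e.2 b

/-- The edge `e` is open in the configuration `ξ`: it lies on the segment of a
feasible pair whose label is open. -/
def EdgeOpen {d : ℕ} (ξ : Cfg d) (e : EdgeIdx d) : Prop :=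
  ∃ v w : Site d, FeasiblePair ξ.1 v w ∧ EdgeOnSeg e v w ∧ ξ.2 (v, w) = true

/-- The induced edge configuration `σ ∈ {0,1}^{E^d}` (as a `Bool`). -/
noncomputable def edgeState {d : ℕ} (ξ : Cfg d) (e : EdgeIdx d) : Bool :=
  @decide (EdgeOpen ξ e) (Classical.propDecidable _)

/-- The graph on `ℤ^d` whose edges are the open edges of the configuration `ξ`. -/
def openGraph {d : ℕ} (ξ : Cfg d) : SimpleGraph (Site d) where
  Adj u v := ∃ i, (v = up u i ∧ EdgeOpen ξ (u, i)) ∨ (u = up v i ∧ EdgeOpen ξ (v, i))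
  symm := ⟨by rintro u v ⟨i, h | h⟩; exacts [⟨i, Or.inr h⟩, ⟨i, Or.inl h⟩]⟩
  loopless := ⟨by
    rintro u ⟨i, ⟨h, -⟩ | ⟨h, -⟩⟩ <;>
    · have := congrFun h i
      simp [up, seg] at this⟩

/-- The site `v` lies in an infinite connected component of open edges. -/
def PercolatesFrom {d : ℕ} (ξ : Cfg d) (v : Site d) : Prop :=
  {w | (openGraph ξ).Reachable v w}.Infinite

/-- The set `𝒪` of open edges percolates. -/
def Percolates {d : ℕ} (ξ : Cfg d) : Prop := ∃ v, PercolatesFrom ξ v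

/-- `θ(p,λ,d)`: the probability that the origin lies in an infinite open cluster. -/
noncomputable def theta (d : ℕ) (p lam : ℝ) : ℝ≥0∞ :=
  alignMeasure d p lam {ξ | PercolatesFrom ξ 0}

/-- `ℙ_{p,λ,d}(𝒪 percolates)`. -/
noncomputable def percProb (d : ℕ) (p lam : ℝ) : ℝ≥0∞ :=
  alignMeasure d p lam {ξ | Percolates ξ}

/-- The critical segment parameter `λ_c(p,d) = sup {λ ≥ 0 : θ(p,λ,d) = 0}`. -/
noncomputable def lambdaC (d : ℕ) (p : ℝ) : ℝ :=
  sSup {lam : ℝ | 0 ≤ lam ∧ theta d p lam = 0}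

/-- A configuration of Bernoulli bond percolation on `ℤ^d`. -/
abbrev BondCfg (d : ℕ) := EdgeIdx d → Bool

/-- Independent Bernoulli(λ) bond percolation on `ℤ^d`. -/
noncomputable def bondMeasure (d : ℕ) (lam : ℝ) : Measure (BondCfg d) :=
  iidBool (EdgeIdx d) lam

/-- The graph of open bonds of a bond configuration. -/
def bondGraph {d : ℕ} (σ : BondCfg d) : SimpleGraph (Site d) where
  Adj u v := ∃ i, (v = up u i ∧ σ (u, i) = true) ∨ (u = up v i ∧ σ (v, i) = true)
  symm := ⟨by rintro u v ⟨i, h | h⟩; exacts [⟨i, Or.inr h⟩, ⟨i, Or.inl h⟩]⟩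
  loopless := ⟨by
    rintro u ⟨i, ⟨h, -⟩ | ⟨h, -⟩⟩ <;>
    · have := congrFun h i
      simp [up, seg] at this⟩

/-- The percolation function of Bernoulli bond percolation on `ℤ^d`. -/
noncomputable def thetaBond (d : ℕ) (lam : ℝ) : ℝ≥0∞ :=
  bondMeasure d lam {σ | {w | (bondGraph σ).Reachable 0 w}.Infinite}

/-- The critical parameter `p_c^bond(d)` of Bernoulli bond percolation on `ℤ^d`. -/
noncomputable def pcBond (d : ℕ) : ℝ :=
  sSup {lam : ℝ | 0 ≤ lam ∧ thetaBond d lam = 0}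

/-- The (closed) sup-norm box `B(x,L)` in `ℤ^d`. -/
def box (d : ℕ) (x : Site d) (L : ℝ) : Set (Site d) :=
  {z | ∀ i, |((z i - x i : ℤ) : ℝ)| ≤ L}

/-- The sphere `∂B(x,L) = {z : ‖z - x‖_∞ = ⌊L⌋}` in `ℤ^d`. -/
def sphere (d : ℕ) (x : Site d) (L : ℝ) : Set (Site d) :=
  {z | (∀ i, |z i - x i| ≤ ⌊L⌋) ∧ ∃ i, |z i - x i| = ⌊L⌋}

/-- The sup-norm distance `‖x - y‖_∞` on `ℤ^d` (as a natural number). -/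
def supDist {d : ℕ} (x y : Site d) : ℕ :=
  Finset.univ.sup fun i => (x i - y i).natAbs

/-- The sequence of scales: `L 0 = 10^4` and `L (k+1) = (L k)^(3/2)`. -/
noncomputable def Lscale : ℕ → ℝ
  | 0 => 10 ^ 4
  | k + 1 => Lscale k ^ ((3 : ℝ) / 2)

/-- `α(p) = -log (1-p)`. -/
noncomputable def alphaP (p : ℝ) : ℝ := - Real.log (1 - p)

/-- The edge `e` has both endpoints in `B`. -/
def EdgeIn {d : ℕ} (B : Set (Site d)) (e : EdgeIdx d) : Prop :=
  e.1 ∈ B ∧ up e.1 e.2 ∈ B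

/-- The event `A` is supported on the edges of `B`: it is measurable with respect to
the σ-algebra generated by the states of the edges with both endpoints in `B`. -/
def SupportedOnEdges {d : ℕ} (B : Set (Site d)) (A : Set (Cfg d)) : Prop :=
  MeasurableSet[MeasurableSpace.comap
    (fun ξ (e : {e : EdgeIdx d // EdgeIn B e}) => edgeState ξ e.1) inferInstance] A

/-- `S` is a set of points of `T` whose `L`-boxes cover `T`. -/
def IsCover (d : ℕ) (T : Set (Site d)) (L : ℝ) (S : Finset (Site d)) : Prop :=
  ↑S ⊆ T ∧ T ⊆ ⋃ x ∈ S, box d x L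

/-- `S` is a cover of `T` by `L`-boxes centred in `T`, of minimal cardinality. -/
def IsMinCover (d : ℕ) (T : Set (Site d)) (L : ℝ) (S : Finset (Site d)) : Prop :=
  IsCover d T L S ∧ ∀ S' : Finset (Site d), IsCover d T L S' → S.card ≤ S'.card

end AlignmentPercolation

/-!
Conditionally on the site configuration `ω`, almost surely every edge has occupied sites on both
sides along its line, so it lies on the segment of exactly one feasible pair and is open iff that
pair carries an open label. Two distinct edges with the same coordinate sum never lie on a common
segment: the segment fixes the direction and all other coordinates, and the sum fixes the last
one. So, given `ω`, the states of finitely many edges between the levels `k` and `k + 1` are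
labels of distinct pairs, hence independent Bernoulli(λ). Sites and labels are i.i.d. because
the skewed binary digits of a uniform variable on `[0,1)` are i.i.d. Bernoulli, i.e. `iidBool`
is the product measure `Measure.infinitePi` of Bernoulli measures.
-/

open Set ProbabilityTheory

lemma unitInterval.coe_toNNReal_eq_ofReal (x : unitInterval) :
    (unitInterval.toNNReal x : ℝ≥0∞) = ENNReal.ofReal x := by
  rw [ENNReal.ofReal, Real.toNNReal_of_nonneg x.2.1]
  rfl

lemma ProbabilityTheory.bernoulliMeasure_true_false_apply (x : unitInterval) (B : Set Bool) :
    Ber(true, false, x) B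
      = B.indicator 1 true * ENNReal.ofReal x + B.indicator 1 false * ENNReal.ofReal (1 - x) := by
  rw [bernoulliMeasure_def, Measure.add_apply, Measure.smul_apply, Measure.smul_apply,
    Measure.dirac_apply, Measure.dirac_apply, ENNReal.smul_def, ENNReal.smul_def, smul_eq_mul,
    smul_eq_mul, unitInterval.coe_toNNReal_eq_ofReal, unitInterval.coe_toNNReal_eq_ofReal,
    unitInterval.coe_symm_eq]
  ring

lemma MeasureTheory.Measure.infinitePi_pi_const_eq_zero {ι X : Type*} [MeasurableSpace X]
    (ν : Measure X) [IsProbabilityMeasure ν] {A : Set X} (hA : MeasurableSet A) (hνA : ν A < 1)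
    {s : Set ι} (hs : s.Infinite) : Measure.infinitePi (fun _ : ι => ν) (s.pi fun _ => A) = 0 := by
  refine le_antisymm (ge_of_tendsto' (ENNReal.tendsto_pow_atTop_nhds_zero_of_lt_one hνA)
    fun n => ?_) bot_le
  obtain ⟨F, hFs, hF⟩ := hs.exists_subset_card_eq n
  calc Measure.infinitePi (fun _ : ι => ν) (s.pi fun _ => A)
      ≤ Measure.infinitePi (fun _ : ι => ν) ((F : Set ι).pi fun _ => A) :=
        measure_mono fun f hf i hi => hf i (hFs hi)
    _ = ν A ^ n := by rw [Measure.infinitePi_pi _ fun _ _ => hA, Finset.prod_const, hF]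

lemma ProbabilityTheory.iIndepFun_of_measure_biInter_eq_prod {Ω ι : Type*} [MeasurableSpace Ω]
    {μ : Measure Ω} {X : ι → Ω → Bool} (hX : ∀ i, Measurable (X i))
    (h : ∀ s : Finset ι, μ (⋂ i ∈ s, {ω | X i ω = true}) = ∏ i ∈ s, μ {ω | X i ω = true}) :
    iIndepFun X μ := by
  have hsets : iIndepSet (fun i => {ω | X i ω = true}) μ :=
    (iIndepSet_iff_meas_biInter fun i => hX i (measurableSet_singleton true)).2 h
  convert (hsets.iIndepFun_indicator (β := ℕ)).comp (fun _ n => decide (n = 1))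
    fun _ => measurable_from_nat using 1
  funext i ω
  cases hω : X i ω <;> simp [hω]

lemma Int.existsUnique_consecutive_around {P : ℤ → Prop} {x : ℤ} (hle : ∃ a ≤ x, P a)
    (hgt : ∃ b > x, P b) :
    ∃! ab : ℤ × ℤ, ab.1 ≤ x ∧ x < ab.2 ∧ P ab.1 ∧ P ab.2 ∧ ∀ c, ab.1 < c → c < ab.2 → ¬ P c := by
  obtain ⟨a, ⟨hax, hPa⟩, hamax⟩ :=
    Int.exists_greatest_of_bdd (P := fun a => a ≤ x ∧ P a) ⟨x, fun _ h => h.1⟩ hle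
  obtain ⟨b, ⟨hxb, hPb⟩, hbmin⟩ :=
    Int.exists_least_of_bdd (P := fun b => x < b ∧ P b) ⟨x + 1, fun _ h => h.1⟩ hgt
  refine ⟨(a, b), ⟨hax, hxb, hPa, hPb, fun c hac hcb hPc => ?_⟩, ?_⟩
  · rcases le_or_gt c x with hcx | hxc
    · exact (hamax c ⟨hcx, hPc⟩).not_gt hac
    · exact (hbmin c ⟨hxc, hPc⟩).not_gt hcb
  · rintro ⟨a', b'⟩ ⟨ha'x, hxb', hPa', hPb', hgap⟩
    have ha : a' = a :=
      (hamax a' ⟨ha'x, hPa'⟩).antisymm (not_lt.1 fun h => hgap a h (by omega) hPa)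
    have hb : b' = b :=
      (not_lt.1 fun h => hgap b (by omega) h hPb).antisymm (hbmin b' ⟨hxb', hPb'⟩)
    rw [ha, hb]

lemma volume_affine_preimage_Ico (a : ℝ) {ℓ : ℝ} (hℓ : 0 ≤ ℓ) (A : Set ℝ) :
    volume {x | x ∈ Ico a (a + ℓ) ∧ (x - a) / ℓ ∈ A}
      = ENNReal.ofReal ℓ * volume (A ∩ Ico 0 1) := by
  rcases hℓ.eq_or_lt with rfl | hℓ
  · simp
  have hset : {x | x ∈ Ico a (a + ℓ) ∧ (x - a) / ℓ ∈ A}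
      = (· + -a) ⁻¹' ((ℓ⁻¹ * ·) ⁻¹' (A ∩ Ico 0 1)) := by
    ext x
    simp only [mem_ofPred_eq, mem_preimage, mem_inter_iff, mem_Ico, ← div_eq_inv_mul,
      ← sub_eq_add_neg, le_div_iff₀ hℓ, div_lt_iff₀ hℓ]
    constructor
    · rintro ⟨⟨h0, h1⟩, hA⟩
      exact ⟨hA, by linarith, by linarith⟩
    · rintro ⟨hA, h0, h1⟩
      exact ⟨⟨by linarith, by linarith⟩, hA⟩
  rw [hset, measure_preimage_add_right, Real.volume_preimage_mul_left (inv_ne_zero hℓ.ne'),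
    inv_inv, abs_of_pos hℓ]

instance : IsProbabilityMeasure (volume.restrict (Ico (0 : ℝ) 1)) :=
  ⟨by simp⟩

namespace AlignmentPercolation

lemma measurable_bernShift (p : ℝ) : Measurable (bernShift p) :=
  Measurable.ite (measurableSet_lt measurable_id measurable_const)
    (measurable_id.div_const p) ((measurable_id.sub_const p).div_const (1 - p))

lemma measurable_bernDigits (p : ℝ) : Measurable (bernDigits p) :=
  measurable_pi_lambda _ fun n =>
    (Measurable.ite (measurableSet_lt measurable_id measurable_const) measurable_const
      measurable_const).comp ((measurable_bernShift p).iterate n)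

variable {p : ℝ}

lemma restrict_Ico_Iio_inter_bernShift_preimage (hp : p ∈ Icc (0 : ℝ) 1) (A : Set ℝ) :
    volume.restrict (Ico 0 1) (Iio p ∩ bernShift p ⁻¹' A)
      = ENNReal.ofReal p * volume.restrict (Ico 0 1) A := by
  rw [Measure.restrict_apply' measurableSet_Ico, Measure.restrict_apply' measurableSet_Ico,
    ← volume_affine_preimage_Ico 0 hp.1]
  congr 1 with x
  simp only [mem_inter_iff, mem_Iio, mem_preimage, mem_Ico, zero_add, sub_zero]
  constructor
  · rintro ⟨⟨hxp, hA⟩, h0, -⟩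
    exact ⟨⟨h0, hxp⟩, by rwa [bernShift, if_pos hxp] at hA⟩
  · rintro ⟨⟨h0, hxp⟩, hA⟩
    exact ⟨⟨hxp, by rwa [bernShift, if_pos hxp]⟩, h0, hxp.trans_le hp.2⟩

lemma restrict_Ico_Ici_inter_bernShift_preimage (hp : p ∈ Icc (0 : ℝ) 1) (A : Set ℝ) :
    volume.restrict (Ico 0 1) (Ici p ∩ bernShift p ⁻¹' A)
      = ENNReal.ofReal (1 - p) * volume.restrict (Ico 0 1) A := by
  rw [Measure.restrict_apply' measurableSet_Ico, Measure.restrict_apply' measurableSet_Ico,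
    ← volume_affine_preimage_Ico p (sub_nonneg.2 hp.2)]
  congr 1 with x
  simp only [mem_inter_iff, mem_Ici, mem_preimage, mem_Ico, add_sub_cancel]
  constructor
  · rintro ⟨⟨hpx, hA⟩, -, hx1⟩
    exact ⟨⟨hpx, hx1⟩, by rwa [bernShift, if_neg hpx.not_gt] at hA⟩
  · rintro ⟨⟨hpx, hx1⟩, hA⟩
    exact ⟨⟨hpx, by rwa [bernShift, if_neg hpx.not_gt]⟩, hp.1.trans hpx, hx1⟩

lemma restrict_Ico_bernDigit_mem_inter_bernShift_preimage (hp : p ∈ Icc (0 : ℝ) 1)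
    (B : Set Bool) (A : Set ℝ) :
    volume.restrict (Ico 0 1) ({x | bernDigit p x ∈ B} ∩ bernShift p ⁻¹' A)
      = Ber(true, false, ⟨p, hp⟩) B * volume.restrict (Ico 0 1) A := by
  set U := volume.restrict (Ico (0 : ℝ) 1)
  have hdigit (x : ℝ) : bernDigit p x = decide (x < p) := by
    by_cases hx : x < p <;> simp [bernDigit, hx]
  have hlt : U ({x | bernDigit p x ∈ B} ∩ bernShift p ⁻¹' A ∩ Iio p)
      = B.indicator 1 true * (ENNReal.ofReal p * U A) := by
    rw [← restrict_Ico_Iio_inter_bernShift_preimage hp A]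
    by_cases ht : true ∈ B
    · rw [indicator_of_mem ht, Pi.one_apply, one_mul]
      congr 1 with x
      by_cases hx : x < p <;> simp [hdigit, hx, ht]
    · rw [indicator_of_notMem ht, zero_mul, ← measure_empty (μ := U)]
      congr 1 with x
      by_cases hx : x < p <;> simp [hdigit, hx, ht]
  have hge : U (({x | bernDigit p x ∈ B} ∩ bernShift p ⁻¹' A) \ Iio p)
      = B.indicator 1 false * (ENNReal.ofReal (1 - p) * U A) := by
    rw [← restrict_Ico_Ici_inter_bernShift_preimage hp A]
    by_cases hf : false ∈ B
    · rw [indicator_of_mem hf, Pi.one_apply, one_mul]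
      congr 1 with x
      by_cases hx : x < p <;> simp [hdigit, hx, hf, le_of_not_gt]
    · rw [indicator_of_notMem hf, zero_mul, ← measure_empty (μ := U)]
      congr 1 with x
      by_cases hx : x < p <;> simp [hdigit, hx, hf]
  rw [← measure_inter_add_sdiff _ measurableSet_Iio, hlt, hge,
    bernoulliMeasure_true_false_apply, add_mul]
  ring

lemma restrict_Ico_bernDigits_prefix (hp : p ∈ Icc (0 : ℝ) 1) (N : ℕ) (t : ℕ → Set Bool)
    (A : Set ℝ) :
    volume.restrict (Ico 0 1) ({x | ∀ n < N, bernDigits p x n ∈ t n} ∩ (bernShift p)^[N] ⁻¹' A)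
      = (∏ n ∈ Finset.range N, Ber(true, false, ⟨p, hp⟩) (t n))
          * volume.restrict (Ico 0 1) A := by
  induction N generalizing t with
  | zero => simp
  | succ N ih =>
    have hshift : {x | ∀ n < N + 1, bernDigits p x n ∈ t n} ∩ (bernShift p)^[N + 1] ⁻¹' A
        = {x | bernDigit p x ∈ t 0} ∩ bernShift p ⁻¹'
            ({y | ∀ n < N, bernDigits p y n ∈ t (n + 1)} ∩ (bernShift p)^[N] ⁻¹' A) := by
      ext x
      simp only [mem_inter_iff, mem_ofPred_eq, mem_preimage, Nat.forall_lt_succ_left, bernDigits,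
        Function.iterate_succ_apply, Function.iterate_zero_apply, and_assoc]
    rw [hshift, restrict_Ico_bernDigit_mem_inter_bernShift_preimage, ih,
      Finset.prod_range_succ', mul_comm _ (Ber(true, false, _) (t 0)), mul_assoc]

lemma map_bernDigits_restrict_Ico (hp : p ∈ Icc (0 : ℝ) 1) :
    (volume.restrict (Ico 0 1)).map (bernDigits p)
      = Measure.infinitePi fun _ : ℕ => Ber(true, false, ⟨p, hp⟩) := by
  refine Measure.eq_infinitePi _ fun s t ht => ?_
  obtain ⟨N, hsN⟩ := s.exists_nat_subset_range
  set t' : ℕ → Set Bool := s.piecewise t fun _ => univ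
  have hpre : bernDigits p ⁻¹' (s : Set ℕ).pi t
      = {x | ∀ n < N, bernDigits p x n ∈ t' n} ∩ (bernShift p)^[N] ⁻¹' univ := by
    ext x
    simp only [mem_preimage, mem_pi, Finset.mem_coe, preimage_univ, inter_univ, mem_ofPred_eq]
    refine ⟨fun h n _ => ?_, fun h n hn => ?_⟩
    · by_cases hn : n ∈ s
      · simpa [t', hn] using h n hn
      · simp [t', hn]
    · simpa [t', hn] using h n (Finset.mem_range.1 (hsN hn))
  rw [Measure.map_apply (measurable_bernDigits p) (.pi s.countable_toSet fun n _ => ht n), hpre,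
    restrict_Ico_bernDigits_prefix hp, measure_univ, mul_one, ← Finset.prod_subset hsN]
  · exact Finset.prod_congr rfl fun n hn => by simp [t', hn]
  · intro n _ hn
    simp [t', hn]

instance (ι : Type*) [Countable ι] (p : ℝ) : IsProbabilityMeasure (iidBool ι p) :=
  have := Measure.isProbabilityMeasure_map (μ := volume.restrict (Ico (0 : ℝ) 1))
    (measurable_bernDigits p).aemeasurable
  Measure.isProbabilityMeasure_map
    (measurable_pi_lambda _ fun _ => measurable_pi_apply _).aemeasurable

lemma iidBool_eq_infinitePi (ι : Type*) [Countable ι] (hp : p ∈ Icc (0 : ℝ) 1) :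
    iidBool ι p = Measure.infinitePi fun _ : ι => Ber(true, false, ⟨p, hp⟩) := by
  have hε := (Countable.exists_injective_nat ι).choose_spec
  rw [iidBool, map_bernDigits_restrict_Ico hp]
  set ε := (Countable.exists_injective_nat ι).choose
  refine Measure.eq_infinitePi _ fun s t ht => ?_
  set t' : ℕ → Set Bool := Function.extend ε t fun _ => univ
  have hpre : (fun (f : ℕ → Bool) (i : ι) => f (ε i)) ⁻¹' (s : Set ι).pi t
      = (s.image ε : Set ℕ).pi t' := by
    ext f
    simp [t', hε.extend_apply]
  have hmeas : Measurable fun (f : ℕ → Bool) (i : ι) => f (ε i) :=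
    measurable_pi_lambda _ fun i => measurable_pi_apply _
  rw [Measure.map_apply hmeas (.pi s.countable_toSet fun i _ => ht i), hpre,
    Measure.infinitePi_pi _ fun _ _ => MeasurableSet.of_discrete,
    Finset.prod_image fun i _ j _ h => hε h]
  simp [t', hε.extend_apply]

variable {d : ℕ}

lemma feasiblePair_seg_iff {ω : SiteCfg d} {u : Site d} {i : Fin d} {a b : ℤ} :
    FeasiblePair ω (seg u i a) (seg u i b) ↔ a < b ∧ ω (seg u i a) = true ∧
      ω (seg u i b) = true ∧ ∀ c, a < c → c < b → ω (seg u i c) = false := by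
  constructor
  · rintro ⟨j, -, hlt, ha, hb, hgap⟩
    obtain rfl : j = i := by
      by_contra hji
      simp [seg, Function.update_of_ne hji] at hlt
    simp only [seg, Function.update_self, Function.update_idem] at hlt hgap
    exact ⟨hlt, ha, hb, hgap⟩
  · rintro ⟨hab, ha, hb, hgap⟩
    refine ⟨i, fun j hj => by simp [seg, Function.update_of_ne hj], by simpa [seg], ha, hb, ?_⟩
    simpa [seg] using hgap

def EdgeFlanked (ω : SiteCfg d) (e : EdgeIdx d) : Prop :=
  (∃ a ≤ e.1 e.2, ω (seg e.1 e.2 a) = true) ∧ ∃ b > e.1 e.2, ω (seg e.1 e.2 b) = true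

def IsCoveringPair (ω : SiteCfg d) (e : EdgeIdx d) (vw : Site d × Site d) : Prop :=
  FeasiblePair ω vw.1 vw.2 ∧ EdgeOnSeg e vw.1 vw.2

lemma EdgeFlanked.existsUnique_isCoveringPair {ω : SiteCfg d} {e : EdgeIdx d}
    (h : EdgeFlanked ω e) : ∃! vw, IsCoveringPair ω e vw := by
  obtain ⟨u, i⟩ := e
  obtain ⟨⟨a, b⟩, ⟨hau, hub, hPa, hPb, hgap⟩, huniq⟩ :=
    Int.existsUnique_consecutive_around (P := fun a => ω (seg u i a) = true) h.1 h.2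
  refine ⟨(seg u i a, seg u i b), ⟨feasiblePair_seg_iff.2 ⟨by omega, hPa, hPb,
    fun c h1 h2 => by simpa using hgap c h1 h2⟩, a, b, hau, hub, rfl, rfl⟩, ?_⟩
  rintro ⟨v, w⟩ ⟨hf, a', b', ha', hb', rfl, rfl⟩
  obtain ⟨-, hPa', hPb', hgap'⟩ := feasiblePair_seg_iff.1 hf
  obtain ⟨rfl, rfl⟩ : a' = a ∧ b' = b := Prod.mk.inj <|
    huniq (a', b') ⟨ha', hb', hPa', hPb', fun c h1 h2 => by simp [hgap' c h1 h2]⟩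
  rfl

lemma edgeOpen_iff_of_isCoveringPair {ω : SiteCfg d} {e : EdgeIdx d} {c : Site d × Site d}
    (hc : IsCoveringPair ω e c) (huniq : ∀ vw, IsCoveringPair ω e vw → vw = c)
    (η : PairLabels d) : EdgeOpen (ω, η) e ↔ η c = true :=
  ⟨fun ⟨v, w, hf, hs, hη⟩ => huniq (v, w) ⟨hf, hs⟩ ▸ hη, fun h => ⟨c.1, c.2, hc.1, hc.2, h⟩⟩

lemma EdgeOnSeg.eq_of_sum_eq {e e' : EdgeIdx d} {v w : Site d} (h : EdgeOnSeg e v w)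
    (h' : EdgeOnSeg e' v w) (hsum : ∑ j, e.1 j = ∑ j, e'.1 j) : e = e' := by
  obtain ⟨u, i⟩ := e
  obtain ⟨u', i'⟩ := e'
  obtain ⟨a, b, ha, hb, rfl, rfl⟩ := h
  obtain ⟨a', b', -, -, hv, hw⟩ := h'
  obtain rfl : i = i' := by
    by_contra hne
    have hva := congrFun hv i
    have hwb := congrFun hw i
    simp [seg, Function.update_of_ne hne] at hva hwb
    omega
  have hu : u = seg (seg u i a) i (u i) := by simp [seg]
  have hu' : u' = seg (seg u i a) i (u' i) := by rw [hv]; simp [seg]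
  have hui : u i = u' i := by
    rw [hu, hu'] at hsum
    simp [seg, Finset.sum_update_of_mem] at hsum
    linarith
  rw [hu, hu', hui]

lemma measurableSet_edgeOpen (e : EdgeIdx d) : MeasurableSet {ξ : Cfg d | EdgeOpen ξ e} := by
  simp only [EdgeOpen, FeasiblePair, ofPred_exists, ofPred_and, ofPred_forall]
  measurability

lemma measurable_edgeState (e : EdgeIdx d) : Measurable fun ξ : Cfg d => edgeState ξ e :=
  (measurable_from_top (f := fun P : Prop => @decide P (Classical.propDecidable P))).comp
    (measurableSet_setOfPred.1 (measurableSet_edgeOpen e))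

lemma ae_edgeFlanked (hp : p ∈ Ioc (0 : ℝ) 1) (e : EdgeIdx d) :
    ∀ᵐ ω ∂iidBool (Site d) p, EdgeFlanked ω e := by
  have hp' : p ∈ Icc (0 : ℝ) 1 := Ioc_subset_Icc_self hp
  have hfalse : Ber(true, false, ⟨p, hp'⟩) {false} < 1 := by
    rw [bernoulliMeasure_true_false_apply]
    simpa using hp.1
  obtain ⟨u, i⟩ := e
  have hinj : Function.Injective (seg u i) := Function.update_injective u i
  rw [ae_iff, iidBool_eq_infinitePi _ hp']
  refine measure_mono_null (t := ((seg u i '' Iic (u i)).pi fun _ => {false}) ∪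
      (seg u i '' Ioi (u i)).pi fun _ => {false}) (fun ω hω => ?_) (measure_union_null ?_ ?_)
  · rw [mem_ofPred_eq, EdgeFlanked, not_and_or] at hω
    simp only [not_exists, not_and, Bool.not_eq_true] at hω
    simpa [mem_pi] using hω
  · exact Measure.infinitePi_pi_const_eq_zero _ (measurableSet_singleton _) hfalse
      ((Iic_infinite _).image hinj.injOn)
  · exact Measure.infinitePi_pi_const_eq_zero _ (measurableSet_singleton _) hfalse
      ((Ioi_infinite _).image hinj.injOn)

@[simp]
lemma edgeState_eq_true {ξ : Cfg d} {e : EdgeIdx d} : edgeState ξ e = true ↔ EdgeOpen ξ e := by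
  simp [edgeState]

lemma iidBool_setOf_forall_edgeOpen {lam : ℝ} (hlam : lam ∈ Icc (0 : ℝ) 1) {k : ℤ}
    {ω : SiteCfg d} (s : Finset {e : EdgeIdx d // ∑ j, e.1 j = k})
    (hω : ∀ e ∈ s, EdgeFlanked ω e.1) :
    iidBool (Site d × Site d) lam {η | ∀ e ∈ s, EdgeOpen (ω, η) e.1}
      = ENNReal.ofReal lam ^ s.card := by
  choose! c hc huniq using fun e (he : e ∈ s) => (hω e he).existsUnique_isCoveringPair
  have hinj : InjOn c s := fun e he e' he' hee =>
    Subtype.ext <| (hc e he).2.eq_of_sum_eq (hee ▸ (hc e' he').2) (e.2.trans e'.2.symm)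
  have hset : {η | ∀ e ∈ s, EdgeOpen (ω, η) e.1} = (s.image c : Set _).pi fun _ => {true} := by
    ext η
    simp only [mem_ofPred_eq, mem_pi, Finset.coe_image, forall_mem_image, Finset.mem_coe,
      mem_singleton_iff]
    exact forall₂_congr fun e he => edgeOpen_iff_of_isCoveringPair (hc e he) (huniq e he) η
  rw [hset, iidBool_eq_infinitePi _ hlam,
    Measure.infinitePi_pi _ fun _ _ => measurableSet_singleton _, Finset.prod_const,
    Finset.card_image_of_injOn hinj, bernoulliMeasure_true_false_apply]
  simp

lemma alignMeasure_biInter_edgeState_eq_true {lam : ℝ} (hp : p ∈ Ioc (0 : ℝ) 1)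
    (hlam : lam ∈ Icc (0 : ℝ) 1) {k : ℤ} (s : Finset {e : EdgeIdx d // ∑ j, e.1 j = k}) :
    alignMeasure d p lam (⋂ e ∈ s, {ξ | edgeState ξ e.1 = true})
      = ENNReal.ofReal lam ^ s.card := by
  have hflanked : ∀ᵐ ω ∂iidBool (Site d) p, ∀ e ∈ s, EdgeFlanked ω e.1 :=
    (Filter.eventually_all_finset s).2 fun e _ => ae_edgeFlanked hp e.1
  have hmeas : MeasurableSet (⋂ e ∈ s, {ξ : Cfg d | edgeState ξ e.1 = true}) :=
    .biInter s.countable_toSet fun e _ => measurable_edgeState e.1 (measurableSet_singleton true)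
  rw [alignMeasure, Measure.prod_apply hmeas]
  calc ∫⁻ ω, iidBool (Site d × Site d) lam
        (Prod.mk ω ⁻¹' ⋂ e ∈ s, {ξ | edgeState ξ e.1 = true}) ∂iidBool (Site d) p
      = ∫⁻ _, ENNReal.ofReal lam ^ s.card ∂iidBool (Site d) p := by
        refine lintegral_congr_ae (hflanked.mono fun ω hω => ?_)
        rw [← iidBool_setOf_forall_edgeOpen hlam s hω]
        dsimp only
        congr 1 with η
        simp
    _ = ENNReal.ofReal lam ^ s.card := by rw [lintegral_const, measure_univ, mul_one]

/-- **Hexagonal embedding independence.** Fix `p ∈ (0,1]`, `λ ∈ [0,1]`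
and `k ∈ ℤ`; let `V₁ = {x+y+z = k}` and `V₂ = {x+y+z = k+1}` in `ℤ³`. Under
`ℙ_{p,λ,3}` the states of the edges with one endpoint in `V₁` and the other in `V₂`
are independent, each open with probability `λ`. -/
theorem hexagonal_embedding_independent (p lam : ℝ) (hp : p ∈ Set.Ioc (0 : ℝ) 1)
    (hlam : lam ∈ Set.Icc (0 : ℝ) 1) (k : ℤ) :
    ProbabilityTheory.iIndepFun
      (fun (e : {e : EdgeIdx 3 // (∑ j, e.1 j) = k}) (ξ : Cfg 3) => edgeState ξ e.1)
      (alignMeasure 3 p lam) ∧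
    ∀ e : {e : EdgeIdx 3 // (∑ j, e.1 j) = k},
      alignMeasure 3 p lam {ξ | edgeState ξ e.1 = true} = ENNReal.ofReal lam := by
  have hopen := alignMeasure_biInter_edgeState_eq_true (d := 3) hp hlam (k := k)
  have hsingle (e : {e : EdgeIdx 3 // (∑ j, e.1 j) = k}) :
      alignMeasure 3 p lam {ξ | edgeState ξ e.1 = true} = ENNReal.ofReal lam := by
    simpa using hopen {e}
  refine ⟨iIndepFun_of_measure_biInter_eq_prod (fun e => measurable_edgeState e.1)
    fun s => ?_, hsingle⟩
  rw [hopen, Finset.prod_congr rfl fun e _ => hsingle e, Finset.prod_const]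

end AlignmentPercolation
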